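/- Let Σ ⊆ X and let δ, μ, ε̃ > 0 satisfy ε̃ ≤ δ ≤ μ²/2. Assume that for every f ∈ K there is g ∈ Σ ∩ K with ‖f − g‖_X ≤ δ. Let f ∈ K and w := λ(f). Suppose f̃ = ι(h̃) with h̃ ∈ Y and ι(h̃) ∈ Σ is an ε̃-approximate minimizer of the loss: ‖λ(ι(h̃)) − w‖ + μ‖h̃‖_Y ≤ ‖λ(ι(h)) − w‖ + μ‖h‖_Y + ε̃ for every h ∈ Y with ι(h) ∈ Σ. Then, with ε := μ·max(C₀, 1+μ), one has ‖f − f̃‖_X ≤ ε + 2 R(K(w, 2ε))_X. -/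

import Mathlib

/-!
Comparing `f̃` with a point of `Σ ∩ K` that is `δ`-close to `f` bounds its loss by
`δ + μ + ε̃ ≤ μ² + μ`, so its data misfit is at most `μ(1 + μ) ≤ ε` and `‖h̃‖_Y ≤ 1 + μ`.
Pulling `h̃` radially back into the unit ball of `Y` moves `ι(h̃)` by at most `C₀μ ≤ ε` and lands
in `K(w, 2ε)`. Since `f ∈ K(w, 2ε)` as well, and two points of a set are at most twice its
Chebyshev radius apart, `‖f − f̃‖ ≤ ε + 2 R(K(w, 2ε))`.
-/

/-- Chebyshev radius of a set `S` in a normed space `X`: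
`R(S) = inf_{z ∈ X} sup_{f ∈ S} ‖f - z‖`. -/
noncomputable def chebRad {X : Type*} [NormedAddCommGroup X] (S : Set X) : ℝ :=
  ⨅ z : X, ⨆ f : S, ‖(f : X) - z‖

/-- Weighted euclidean norm on `ℝ^m`: `‖v‖ = ( m⁻¹ ∑ v_j² )^{1/2}`. -/
noncomputable def wNorm {m : ℕ} (v : Fin m → ℝ) : ℝ :=
  Real.sqrt ((∑ j, v j ^ 2) / m)

section wNorm

variable {m : ℕ}

lemma wNorm_nonneg (v : Fin m → ℝ) : 0 ≤ wNorm v := Real.sqrt_nonneg _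

lemma wNorm_eq_norm_toLp_div_sqrt (v : Fin m → ℝ) :
    wNorm v = ‖WithLp.toLp 2 v‖ / Real.sqrt m := by
  rw [wNorm, Real.sqrt_div' _ (Nat.cast_nonneg m), EuclideanSpace.norm_eq]
  simp only [Real.norm_eq_abs, sq_abs]

lemma wNorm_add_le (a b : Fin m → ℝ) : wNorm (a + b) ≤ wNorm a + wNorm b := by
  simp only [wNorm_eq_norm_toLp_div_sqrt, WithLp.toLp_add, ← add_div]
  gcongr
  exact norm_add_le _ _

lemma wNorm_sub_le_wNorm_sub_add_wNorm_sub (a b c : Fin m → ℝ) :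
    wNorm (fun j => a j - c j) ≤ wNorm (fun j => a j - b j) + wNorm (fun j => b j - c j) := by
  convert wNorm_add_le (fun j => a j - b j) (fun j => b j - c j) using 2
  ext j
  simp

lemma wNorm_le_of_forall_abs_le {v : Fin m → ℝ} {c : ℝ} (hc : 0 ≤ c) (h : ∀ j, |v j| ≤ c) :
    wNorm v ≤ c := by
  rw [wNorm, Real.sqrt_le_left hc]
  refine div_le_of_le_mul₀ (Nat.cast_nonneg m) (sq_nonneg c) ?_
  calc ∑ j, v j ^ 2 ≤ ∑ _j : Fin m, c ^ 2 := by
        refine Finset.sum_le_sum fun j _ => ?_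
        exact sq_le_sq' (abs_le.1 (h j)).1 (abs_le.1 (h j)).2
    _ = c ^ 2 * m := by simp [mul_comm]

lemma wNorm_sub_le_norm_sub {X : Type*} [NormedAddCommGroup X] [NormedSpace ℝ X]
    {lam : Fin m → X →L[ℝ] ℝ} (hlam : ∀ j, ‖lam j‖ ≤ 1) (g h : X) :
    wNorm (fun j => lam j g - lam j h) ≤ ‖g - h‖ := by
  refine wNorm_le_of_forall_abs_le (norm_nonneg _) fun j => ?_
  calc |lam j g - lam j h| = ‖lam j (g - h)‖ := by rw [map_sub, Real.norm_eq_abs]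
    _ ≤ 1 * ‖g - h‖ := (lam j).le_of_opNorm_le (hlam j) _
    _ = ‖g - h‖ := one_mul _

end wNorm

lemma norm_sub_le_two_mul_chebRad {X : Type*} [NormedAddCommGroup X] {S : Set X}
    (hS : Bornology.IsBounded S) {a b : X} (ha : a ∈ S) (hb : b ∈ S) :
    ‖a - b‖ ≤ 2 * chebRad S := by
  rw [chebRad, ← div_le_iff₀' two_pos]
  refine le_ciInf fun z => ?_
  obtain ⟨r, hr⟩ := (Metric.isBounded_iff_subset_closedBall z).1 hS
  have hbdd : BddAbove (Set.range fun u : S => ‖(u : X) - z‖) := by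
    refine ⟨r, ?_⟩
    rintro _ ⟨u, rfl⟩
    simpa [dist_eq_norm] using hr u.2
  have hza := le_ciSup hbdd ⟨a, ha⟩
  have hzb := le_ciSup hbdd ⟨b, hb⟩
  linarith [norm_sub_le_norm_sub_add_norm_sub a z b, norm_sub_rev b z]

lemma exists_norm_le_one_norm_sub_le {Y : Type*} [NormedAddCommGroup Y] [NormedSpace ℝ Y]
    {y : Y} {μ : ℝ} (hμ : 0 ≤ μ) (hy : ‖y‖ ≤ 1 + μ) : ∃ y' : Y, ‖y'‖ ≤ 1 ∧ ‖y - y'‖ ≤ μ := by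
  rcases le_or_gt ‖y‖ 1 with hy1 | hy1
  · exact ⟨y, hy1, by simpa using hμ⟩
  · have hy0 : y ≠ 0 := norm_pos_iff.1 (one_pos.trans hy1)
    refine ⟨‖y‖⁻¹ • y, (norm_smul_inv_norm hy0).le, ?_⟩
    have : ‖y - ‖y‖⁻¹ • y‖ = ‖y‖ - 1 := by
      rw [show y - ‖y‖⁻¹ • y = (1 - ‖y‖⁻¹) • y by rw [sub_smul, one_smul], norm_smul,
        Real.norm_eq_abs, abs_of_nonneg, sub_mul, inv_mul_cancel₀ (norm_ne_zero_iff.2 hy0), one_mul]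
      exact sub_nonneg.2 (inv_le_one_of_one_le₀ hy1.le)
    linarith

lemma isBounded_image_norm_le_one {X Y : Type*} [NormedAddCommGroup X] [NormedAddCommGroup Y]
    [NormedSpace ℝ X] [NormedSpace ℝ Y] (ι : Y →ₗ[ℝ] X) {C : ℝ} (hC : ∀ g, ‖ι g‖ ≤ C * ‖g‖) :
    Bornology.IsBounded (ι '' {g : Y | ‖g‖ ≤ 1}) := by
  refine isBounded_iff_forall_norm_le.2 ⟨|C|, ?_⟩
  rintro _ ⟨g, hg : ‖g‖ ≤ 1, rfl⟩
  calc ‖ι g‖ ≤ C * ‖g‖ := hC g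
    _ ≤ |C| * 1 := mul_le_mul (le_abs_self C) hg (norm_nonneg g) (abs_nonneg C)
    _ = |C| := mul_one _

theorem stmt_4_general
    {X Y : Type*} [NormedAddCommGroup X] [NormedSpace ℝ X]
    [NormedAddCommGroup Y] [NormedSpace ℝ Y]
    {m : ℕ}
    (lam : Fin m → X →L[ℝ] ℝ) (hlam : ∀ j, ‖lam j‖ ≤ 1)
    (ι : Y →ₗ[ℝ] X)
    (C₀ : ℝ) (hC₀ : ∀ g : Y, ‖ι g‖ ≤ C₀ * ‖g‖)
    (Sig : Set X) (δ μ εt : ℝ) (hμ : 0 < μ)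
    (hεtδ : εt ≤ δ) (hδμ : δ ≤ μ ^ 2 / 2)
    (happrox : ∀ f ∈ ι '' {g : Y | ‖g‖ ≤ 1},
      ∃ g ∈ Sig ∩ ι '' {g : Y | ‖g‖ ≤ 1}, ‖f - g‖ ≤ δ)
    (f : X) (hf : f ∈ ι '' {g : Y | ‖g‖ ≤ 1})
    (ftil : Y)
    (hmin : ∀ h : Y, ι h ∈ Sig →
      wNorm (fun j => lam j (ι ftil) - lam j f) + μ * ‖ftil‖ ≤
        wNorm (fun j => lam j (ι h) - lam j f) + μ * ‖h‖ + εt) :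
    ‖f - ι ftil‖ ≤ μ * max C₀ (1 + μ) +
      2 * chebRad {u ∈ ι '' {g : Y | ‖g‖ ≤ 1} |
        wNorm (fun j => lam j u - lam j f) ≤ 2 * (μ * max C₀ (1 + μ))} := by
  set C := max C₀ (1 + μ)
  set S := {u ∈ ι '' {g : Y | ‖g‖ ≤ 1} | wNorm (fun j => lam j u - lam j f) ≤ 2 * (μ * C)}
  have hC0 : 0 ≤ C := le_max_of_le_right (by positivity)
  have hC : ∀ g : Y, ‖ι g‖ ≤ C * ‖g‖ := fun g =>
    (hC₀ g).trans (mul_le_mul_of_nonneg_right (le_max_left _ _) (norm_nonneg g))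
  have hμC : μ * (1 + μ) ≤ μ * C := mul_le_mul_of_nonneg_left (le_max_right _ _) hμ.le
  obtain ⟨_, ⟨hgS, g, hg : ‖g‖ ≤ 1, rfl⟩, hgf⟩ := happrox f hf
  have hloss : wNorm (fun j => lam j (ι ftil) - lam j f) + μ * ‖ftil‖ ≤ μ * (1 + μ) := by
    have hgw := (wNorm_sub_le_norm_sub hlam (ι g) f).trans ((norm_sub_rev _ _).trans_le hgf)
    linarith [hmin g hgS, mul_le_mul_of_nonneg_left hg hμ.le]
  have hnorm : ‖ftil‖ ≤ 1 + μ :=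
    le_of_mul_le_mul_left (by linarith [wNorm_nonneg fun j => lam j (ι ftil) - lam j f]) hμ
  obtain ⟨y, hy, hyftil⟩ := exists_norm_le_one_norm_sub_le hμ.le hnorm
  have hdist : ‖ι y - ι ftil‖ ≤ μ * C := by
    calc ‖ι y - ι ftil‖ = ‖ι (ftil - y)‖ := by rw [map_sub, norm_sub_rev]
      _ ≤ C * μ := (hC _).trans (mul_le_mul_of_nonneg_left hyftil hC0)
      _ = μ * C := mul_comm _ _
  have hfS : f ∈ S := ⟨hf, by simpa [wNorm] using by positivity⟩
  have hyS : ι y ∈ S :=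
    ⟨⟨y, hy, rfl⟩, (wNorm_sub_le_wNorm_sub_add_wNorm_sub _ (fun j => lam j (ι ftil)) _).trans
      (by linarith [wNorm_sub_le_norm_sub hlam (ι y) (ι ftil),
        mul_nonneg hμ.le (norm_nonneg ftil)])⟩
  have hSbdd : Bornology.IsBounded S := (isBounded_image_norm_le_one ι hC₀).subset fun _ hu => hu.1
  calc ‖f - ι ftil‖ ≤ ‖f - ι y‖ + ‖ι y - ι ftil‖ := norm_sub_le_norm_sub_add_norm_sub _ _ _
    _ ≤ 2 * chebRad S + μ * C := add_le_add (norm_sub_le_two_mul_chebRad hSbdd hfS hyS) hdist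
    _ = _ := add_comm _ _

/-- Near optimality of an `ε̃`-approximate minimizer of the penalized loss
`g ↦ ‖λ(g) − w‖ + μ‖g‖_Y` over `Σ`, for the model class `K = ι(U(Y))`,
with `ε̃ ≤ δ ≤ μ²/2`:  with `ε := μ·max(C₀, 1+μ)` one has
`‖f − f̃‖_X ≤ ε + 2 R(K(w, 2ε))`. -/
theorem stmt_4
    {X Y : Type*} [NormedAddCommGroup X] [NormedSpace ℝ X] [CompleteSpace X]
    [NormedAddCommGroup Y] [NormedSpace ℝ Y]
    {m : ℕ} (hm : 0 < m)
    (lam : Fin m → X →L[ℝ] ℝ) (hlam : ∀ j, ‖lam j‖ ≤ 1)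
    (ι : Y →ₗ[ℝ] X) (hι : Function.Injective ι)
    (C₀ : ℝ) (hC₀ : ∀ g : Y, ‖ι g‖ ≤ C₀ * ‖g‖)
    (hK : IsCompact (ι '' {g : Y | ‖g‖ ≤ 1}))
    (Sig : Set X) (δ μ εt : ℝ) (hδ : 0 < δ) (hμ : 0 < μ) (hεt : 0 < εt)
    (hεtδ : εt ≤ δ) (hδμ : δ ≤ μ ^ 2 / 2)
    (happrox : ∀ f ∈ ι '' {g : Y | ‖g‖ ≤ 1},
      ∃ g ∈ Sig ∩ ι '' {g : Y | ‖g‖ ≤ 1}, ‖f - g‖ ≤ δ)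
    (f : X) (hf : f ∈ ι '' {g : Y | ‖g‖ ≤ 1})
    (ftil : Y) (hftil : ι ftil ∈ Sig)
    (hmin : ∀ h : Y, ι h ∈ Sig →
      wNorm (fun j => lam j (ι ftil) - lam j f) + μ * ‖ftil‖ ≤
        wNorm (fun j => lam j (ι h) - lam j f) + μ * ‖h‖ + εt) :
    ‖f - ι ftil‖ ≤ μ * max C₀ (1 + μ) +
      2 * chebRad {u ∈ ι '' {g : Y | ‖g‖ ≤ 1} |
        wNorm (fun j => lam j u - lam j f) ≤ 2 * (μ * max C₀ (1 + μ))} :=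
  stmt_4_general lam hlam ι C₀ hC₀ Sig δ μ εt hμ hεtδ hδμ happrox f hf ftil hmin
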